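/- (Validity of LB3) Let C be an initial configuration of the BRP in which every stack holds at least k blocks, let 𝔅¹ be the set of blocks badly placed in C, and let 𝔅³ be the top k layers of C. Suppose (1) the block of minimum label does not belong to 𝔅³, and (2) every badly placed block of 𝔅³ has a label strictly greater than the minimum label remaining in stack s after deleting the topmost k−1 blocks of s, for every stack s. Then f(Fin B) ≥ |𝔅¹| + k. -/

import Mathlib

/-- A configuration of the BRP: each stack holds a list of blocks, bottom to top. -/
abbrev Config (B S : ℕ) := Fin S → List (Fin B)

/-- Every block occurs exactly once among the stacks. -/
def IsConfig {B S : ℕ} (C : Config B S) : Prop :=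
  ∀ b : Fin B, (∑ s : Fin S, (C s).count b) = 1

/-- `a` lies strictly below `b` in stack `s` of `C`. -/
def StrictlyBelow {B S : ℕ} (C : Config B S) (s : Fin S) (a b : Fin B) : Prop :=
  ∃ i j : ℕ, i < j ∧ (C s)[i]? = some a ∧ (C s)[j]? = some b

/-- A block is badly placed if some smaller-labelled block lies below it in its stack. -/
def BadlyPlaced {B S : ℕ} (C : Config B S) (b : Fin B) : Prop :=
  ∃ s a, a < b ∧ StrictlyBelow C s a b

/-- Moves: retrieve the top block of a stack, or relocate the top block of one
stack onto another stack. -/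
inductive Move (S : ℕ) where
  | retrieve (s : Fin S)
  | relocate (src dst : Fin S)

def applyMove {B S : ℕ} (C : Config B S) : Move S → Config B S
  | .retrieve s => Function.update C s (C s).dropLast
  | .relocate src dst =>
    match (C src).getLast? with
    | some b =>
      let C' := Function.update C src (C src).dropLast
      Function.update C' dst (C' dst ++ [b])
    | none => C

def Enabled {B S : ℕ} (C : Config B S) : Move S → Prop
  | .retrieve s => ∃ b, (C s).getLast? = some b ∧ ∀ (s' : Fin S), ∀ b' ∈ C s', b ≤ b'
  | .relocate src dst => src ≠ dst ∧ C src ≠ []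

def play {B S : ℕ} (C : Config B S) : List (Move S) → Config B S
  | [] => C
  | m :: ms => play (applyMove C m) ms

def AllEnabled {B S : ℕ} (C : Config B S) : List (Move S) → Prop
  | [] => True
  | m :: ms => Enabled C m ∧ AllEnabled (applyMove C m) ms

/-- A feasible move sequence: every move is enabled and at the end all blocks
have been retrieved. -/
def Feasible {B S : ℕ} (C : Config B S) (ms : List (Move S)) : Prop :=
  AllEnabled C ms ∧ ∀ s, play C ms s = []

/-- `b` is the block moved by `m` (a relocation) performed in configuration `C`. -/
def MovedBlock {B S : ℕ} (C : Config B S) (m : Move S) (b : Fin B) : Prop :=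
  ∃ src dst, m = .relocate src dst ∧ src ≠ dst ∧ (C src).getLast? = some b

/-- The four types of relocation moves. -/
inductive MType where
  | BB | BG | GB | GG

/-- The relocation `m`, moving block `b` from configuration `C`, has the given type. -/
def MTypeOf {B S : ℕ} (C : Config B S) (m : Move S) (b : Fin B) : MType → Prop
  | .BB => BadlyPlaced C b ∧ BadlyPlaced (applyMove C m) b
  | .BG => BadlyPlaced C b ∧ ¬ BadlyPlaced (applyMove C m) b
  | .GB => ¬ BadlyPlaced C b ∧ BadlyPlaced (applyMove C m) b
  | .GG => ¬ BadlyPlaced C b ∧ ¬ BadlyPlaced (applyMove C m) b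

/-- `m` is a relocation of a block of `𝔅`. -/
def RelocIn {B S : ℕ} (𝔅 : Set (Fin B)) (C : Config B S) (m : Move S) : Prop :=
  ∃ b ∈ 𝔅, MovedBlock C m b

/-- `m` is a relocation of a block of `𝔅` of type `mt`. -/
def RelocTypeIn {B S : ℕ} (mt : MType) (𝔅 : Set (Fin B)) (C : Config B S) (m : Move S) : Prop :=
  ∃ b ∈ 𝔅, MovedBlock C m b ∧ MTypeOf C m b mt

/-- `m` is a non-BG relocation of a block of `𝔅`. -/
def RelocNonBGIn {B S : ℕ} (𝔅 : Set (Fin B)) (C : Config B S) (m : Move S) : Prop :=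
  ∃ b ∈ 𝔅, MovedBlock C m b ∧ ¬ MTypeOf C m b MType.BG

/-- Count the moves of a sequence satisfying `P` (evaluated in the configuration
in which each move is performed). -/
noncomputable def countMoves {B S : ℕ} (P : Config B S → Move S → Prop) :
    Config B S → List (Move S) → ℕ
  | _, [] => 0
  | C, m :: ms =>
    (@ite ℕ (P C m) (Classical.propDecidable _) 1 0) + countMoves P (applyMove C m) ms

/-- Minimum over feasible move sequences of the number of moves satisfying `P`. -/
noncomputable def fMin {B S : ℕ} (C : Config B S) (P : Config B S → Move S → Prop) : ℕ :=
  sInf { n | ∃ ms, Feasible C ms ∧ countMoves P C ms = n }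

/-- `f(𝔅)`: least number of relocations applied to blocks of `𝔅`. -/
noncomputable def fRel {B S : ℕ} (C : Config B S) (𝔅 : Set (Fin B)) : ℕ :=
  fMin C (RelocIn 𝔅)

/-- `f_mt(𝔅)`: least number of type-`mt` relocations applied to blocks of `𝔅`. -/
noncomputable def fTyp {B S : ℕ} (C : Config B S) (mt : MType) (𝔅 : Set (Fin B)) : ℕ :=
  fMin C (RelocTypeIn mt 𝔅)

/-- `f_nonBG(𝔅)`: least number of non-BG relocations applied to blocks of `𝔅`. -/
noncomputable def fNonBG {B S : ℕ} (C : Config B S) (𝔅 : Set (Fin B)) : ℕ :=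
  fMin C (RelocNonBGIn 𝔅)

/-- The top 1st layer: the topmost block of each stack. -/
def TopLayer {B S : ℕ} (C : Config B S) : Set (Fin B) :=
  {b | ∃ s, (C s).getLast? = some b}

/-- The top `k` layers: the topmost `k` blocks of every stack. -/
def TopK {B S : ℕ} (C : Config B S) (k : ℕ) : Set (Fin B) :=
  {b | ∃ s, b ∈ (C s).drop ((C s).length - k)}

/-- The top `j`-th layer: the `j`-th block from the top of every stack. -/
def TopJth {B S : ℕ} (C : Config B S) (j : ℕ) : Set (Fin B) :=
  {b | ∃ s, (C s)[(C s).length - j]? = some b}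

/-- A virtual layer: a set of blocks containing exactly one block from each stack. -/
def VirtualLayer {B S : ℕ} (C : Config B S) (V : Set (Fin B)) : Prop :=
  ∀ s : Fin S, ∃! b : Fin B, b ∈ V ∧ b ∈ C s

/-- `a` lies at or below the `V`-block of stack `s`. -/
def AtOrBelowLayer {B S : ℕ} (C : Config B S) (V : Set (Fin B)) (s : Fin S) (a : Fin B) : Prop :=
  ∃ b j, b ∈ V ∧ (C s)[j]? = some b ∧ a ∈ (C s).take (j + 1)

/-- `V` is a virtual layer satisfying the conditions of Property 5:
(1) in some stack, a block strictly below the `V`-block of that stack has a smaller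
label than every block of `V`; (2) every badly placed block of `V` has a label
strictly greater than the minimum label present in stack `s` after deleting all
blocks strictly above the `V`-block of `s`, for every stack `s`. -/
def P5 {B S : ℕ} (C : Config B S) (V : Set (Fin B)) : Prop :=
  VirtualLayer C V ∧
  (∃ s a b, b ∈ V ∧ StrictlyBelow C s a b ∧ ∀ c ∈ V, a < c) ∧
  (∀ b ∈ V, BadlyPlaced C b → ∀ s : Fin S, ∃ a, AtOrBelowLayer C V s a ∧ a < b)

/-- A pair of virtual layers `V₁` (upper), `V₂` (lower) with shared well-placed
block `bstar` satisfying the conditions of Property 7. -/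
def P7 {B S : ℕ} (C : Config B S) (V₁ V₂ : Set (Fin B)) (bstar : Fin B) : Prop :=
  V₁ ∩ V₂ = {bstar} ∧
  ¬ BadlyPlaced C bstar ∧
  (∀ s : Fin S, bstar ∉ C s →
    ∃ b₁ b₂, b₁ ∈ V₁ ∧ b₂ ∈ V₂ ∧ StrictlyBelow C s b₂ b₁) ∧
  P5 C V₁ ∧ P5 C V₂ ∧
  (∀ s : Fin S, ∃ a, AtOrBelowLayer C V₁ s a ∧ a ≤ bstar) ∧
  (∃ s : Fin S, ∀ a, AtOrBelowLayer C V₁ s a → bstar ≤ a)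

/-- Push blocks one by one onto the indicated stacks. -/
def pushAll {B S : ℕ} (C : Config B S) : List (Fin B × Fin S) → Config B S
  | [] => C
  | p :: rest => pushAll (Function.update C p.2 (C p.2 ++ [p.1])) rest

/-- The blocks lying strictly above position `i` of stack `s`, listed from the
top of the stack downward (the processing order of the experiment). -/
def aboveList {B S : ℕ} (C : Config B S) (s : Fin S) (i : ℕ) : List (Fin B) :=
  ((C s).drop (i + 1)).reverse

/-- The arrangement resulting from the experiment of Property 4: the blocks above
position `i` of stack `s` are relocated exactly once, from the top downward, onto
the stacks listed in `ds`. -/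
def expResult {B S : ℕ} (C : Config B S) (s : Fin S) (i : ℕ) (ds : List (Fin S)) :
    Config B S :=
  pushAll (Function.update C s ((C s).take (i + 1))) ((aboveList C s i).zip ds)

/-- The condition of Property 4 (target block at position `i` of stack `sStar`):
in every experiment, some relocated block ends badly placed. -/
def P4Cond {B S : ℕ} (C : Config B S) (sStar : Fin S) (i : ℕ) : Prop :=
  ∀ ds : List (Fin S), ds.length = (aboveList C sStar i).length →
    (∀ d ∈ ds, d ≠ sStar) →
    ∃ b ∈ aboveList C sStar i, BadlyPlaced (expResult C sStar i ds) b

/-- The set `𝔅⁴`: the blocks above the target block together with, for each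
nonempty stack other than the target's stack, its block of minimum label. -/
def B4Set {B S : ℕ} (C : Config B S) (sStar : Fin S) (i : ℕ) : Set (Fin B) :=
  {b | b ∈ aboveList C sStar i} ∪
  {b | ∃ s, s ≠ sStar ∧ b ∈ C s ∧ ∀ b' ∈ C s, b ≤ b'}

/-- The number of direct blockages: adjacent pairs in a stack whose upper block
has a strictly larger label. -/
def directBlockages {B S : ℕ} (C : Config B S) : ℕ :=
  ∑ s : Fin S, (((C s).zip (C s).tail).filter (fun p => decide (p.1 < p.2))).length

/-- The number of relocations in a move sequence. -/
def relocCount {S : ℕ} (ms : List (Move S)) : ℕ :=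
  (ms.filter (fun m => match m with | Move.relocate _ _ => true | Move.retrieve _ => false)).length

/-- The minimum number of relocations over all feasible move sequences. -/
noncomputable def fAll {B S : ℕ} (C : Config B S) : ℕ :=
  sInf { n | ∃ ms, Feasible C ms ∧ relocCount ms = n }

/-- `g(L)`: `L` plus the minimum number of direct blockages over all partial
plans with exactly `L` relocations. -/
noncomputable def gIter {B S : ℕ} (C : Config B S) (L : ℕ) : ℕ :=
  L + sInf { d | ∃ ms : List (Move S), AllEnabled C ms ∧ relocCount ms = L ∧
      d = directBlockages (play C ms) }

/-!
A badly placed block stays badly placed until it is relocated, and none is left at the end, so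
every feasible sequence makes at least `|𝔅¹|` BG relocations; it remains to find `k` non-BG
ones. Call a stack without its top `k - 1` blocks its lower part; the minimum block `t` lies in
a lower part, so nothing is retrieved while all lower parts are intact. Let `s` be the stack
whose lower part is disturbed first. For each of the top `k` blocks `b` of `s`, the first move
that disturbs `b` or a block below it takes `b` off the top of the untouched bottom of `s`.
These `k` moves are distinct relocations (`b ≠ t`), and none is BG: if `b` is badly placed,
condition (2) puts a smaller block into the still intact lower part of the destination stack.
-/

open Function

theorem Fintype.sum_apply_update {ι α M : Type*} [Fintype ι] [DecidableEq ι] [AddCommMonoid M]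
    (g : α → M) (f : ι → α) (i : ι) (x : α) :
    ∑ j, g (update f i x j) + g (f i) = ∑ j, g (f j) + g x := by
  have h := Finset.sum_update_of_mem (Finset.mem_univ i) (g ∘ f) (g x)
  rw [← comp_update] at h
  simp only [comp_apply] at h
  rw [h, Finset.sum_eq_add_sum_sdiff_singleton_of_mem (Finset.mem_univ i) (fun j => g (f j))]
  abel

theorem List.IsPrefix.getElem?_eq_some {α : Type*} {l₁ l₂ : List α} (h : l₁ <+: l₂) {i : ℕ}
    {a : α} (hi : l₁[i]? = some a) : l₂[i]? = some a := by
  obtain ⟨t, rfl⟩ := h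
  rwa [List.getElem?_append_left (List.getElem?_eq_some_iff.1 hi).1]

theorem List.IsPrefix.eq_of_not_prefix_dropLast {α : Type*} {l₁ l₂ : List α} (h : l₁ <+: l₂)
    (h' : ¬ l₁ <+: l₂.dropLast) : l₂ = l₁ := by
  refine (h.eq_of_length (le_antisymm h.length_le (not_lt.1 fun hlt => h' ?_))).symm
  rw [List.prefix_iff_eq_take.1 h, List.dropLast_eq_take]
  exact List.take_prefix_take_left (by omega)

theorem Nat.exists_forall_le_and_not_succ {Q : ℕ → Prop} {n : ℕ} (h0 : Q 0) (hn : ¬ Q n) :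
    ∃ i < n, (∀ j ≤ i, Q j) ∧ ¬ Q (i + 1) := by
  classical
  have hex : ∃ i, ¬ Q i := ⟨n, hn⟩
  have hpos : Nat.find hex ≠ 0 := fun h => Nat.find_spec hex (h ▸ h0)
  refine ⟨Nat.find hex - 1, by have := Nat.find_min' hex hn; omega, fun j hj => ?_, ?_⟩
  · exact not_not.1 (Nat.find_min hex (by omega))
  · rw [Nat.sub_add_cancel (Nat.pos_of_ne_zero hpos)]
    exact Nat.find_spec hex

theorem List.mem_rdrop_of_not_mem_rtake {α : Type*} {l : List α} {n : ℕ} {a : α} (h : a ∈ l)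
    (h' : a ∉ l.rtake n) : a ∈ l.rdrop n := by
  rw [← List.take_append_drop (l.length - n) l, List.mem_append] at h
  exact h.resolve_right h'

theorem List.mem_rtake_of_getElem? {α : Type*} {l : List α} {n p : ℕ} {a : α}
    (h : l[p]? = some a) (hp : l.length - n ≤ p) : a ∈ l.rtake n :=
  List.mem_iff_getElem?.2 ⟨p - (l.length - n), by rwa [List.rtake, List.getElem?_drop,
    Nat.add_sub_cancel' hp]⟩

section

variable {B S : ℕ}

theorem applyMove_retrieve (D : Config B S) (s : Fin S) :
    applyMove D (.retrieve s) = update D s (D s).dropLast := rfl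

theorem applyMove_relocate_of_ne {D : Config B S} {src dst : Fin S} {x : Fin B}
    (h : (D src).getLast? = some x) (hne : src ≠ dst) :
    applyMove D (.relocate src dst) =
      update (update D src (D src).dropLast) dst (D dst ++ [x]) := by
  simp only [applyMove, h, update_of_ne hne.symm]

theorem applyMove_relocate_self (D : Config B S) (s : Fin S) :
    applyMove D (.relocate s s) = D := by
  cases h : (D s).getLast? with
  | none => simp only [applyMove, h]
  | some x => simp [applyMove, h, List.dropLast_append_getLast? x h]

theorem prefix_applyMove_or_eq_dropLast (D : Config B S) (m : Move S) (s : Fin S) :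
    D s <+: applyMove D m s ∨
      applyMove D m s = (D s).dropLast ∧ (m = .retrieve s ∨ ∃ d ≠ s, m = .relocate s d) := by
  cases m with
  | retrieve s' =>
    by_cases hs : s = s'
    · subst hs
      exact Or.inr ⟨by simp [applyMove_retrieve], Or.inl rfl⟩
    · exact Or.inl (by simp [applyMove_retrieve, update_of_ne hs])
  | relocate src dst =>
    cases h : (D src).getLast? with
    | none => exact Or.inl (by simp [applyMove, h])
    | some x =>
      by_cases hne : src = dst
      · subst hne
        exact Or.inl (by rw [applyMove_relocate_self])
      rw [applyMove_relocate_of_ne h hne]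
      by_cases hd : s = dst
      · subst hd
        exact Or.inl (by simp)
      by_cases hs : s = src
      · subst hs
        exact Or.inr ⟨by simp [update_of_ne hd], Or.inr ⟨dst, Ne.symm hne, rfl⟩⟩
      · exact Or.inl (by simp [update_of_ne hd, update_of_ne hs])

theorem eq_of_prefix_of_not_prefix_applyMove {D : Config B S} {m : Move S} {s : Fin S}
    {P : List (Fin B)} (hpre : P <+: D s) (hbreak : ¬ P <+: applyMove D m s) :
    D s = P ∧ (m = .retrieve s ∨ ∃ d ≠ s, m = .relocate s d) := by
  rcases prefix_applyMove_or_eq_dropLast D m s with h | ⟨h, hm⟩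
  · exact absurd (hpre.trans h) hbreak
  · exact ⟨hpre.eq_of_not_prefix_dropLast (h ▸ hbreak), hm⟩

theorem MovedBlock.unique {D : Config B S} {m : Move S} {b b' : Fin B} (h : MovedBlock D m b)
    (h' : MovedBlock D m b') : b = b' := by
  obtain ⟨src, dst, rfl, -, hb⟩ := h
  obtain ⟨src', dst', hm, -, hb'⟩ := h'
  obtain ⟨rfl, -⟩ := Move.relocate.inj hm
  exact Option.some.inj (hb.symm.trans hb')

/-- The part of `IsConfig` that survives retrievals. -/
def Config.Distinct (D : Config B S) : Prop := ∀ b, ∑ s, (D s).count b ≤ 1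

theorem IsConfig.distinct {C : Config B S} (hC : IsConfig C) : C.Distinct := fun b => (hC b).le

theorem IsConfig.exists_mem {C : Config B S} (hC : IsConfig C) (b : Fin B) : ∃ s, b ∈ C s := by
  obtain ⟨s, -, hs⟩ := Finset.exists_ne_zero_of_sum_ne_zero (by rw [hC b]; exact one_ne_zero)
  exact ⟨s, List.count_pos_iff.1 (Nat.pos_of_ne_zero hs)⟩

namespace Config.Distinct

variable {D : Config B S}

theorem eq_of_mem (hD : D.Distinct) {b : Fin B} {s s' : Fin S} (h : b ∈ D s) (h' : b ∈ D s') :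
    s = s' := by
  by_contra hne
  have hle := Finset.sum_le_sum_of_subset (f := fun s => (D s).count b)
    (Finset.subset_univ {s, s'})
  rw [Finset.sum_pair hne] at hle
  have := List.count_pos_iff.2 h
  have := List.count_pos_iff.2 h'
  have := hD b
  omega

theorem applyMove (hD : D.Distinct) (m : Move S) : (applyMove D m).Distinct := by
  intro b
  have hDb := hD b
  cases m with
  | retrieve s =>
    have h := Fintype.sum_apply_update (List.count b) D s (D s).dropLast
    have := (List.dropLast_sublist (D s)).count_le b
    rw [applyMove_retrieve]
    omega
  | relocate src dst =>
    cases h : (D src).getLast? with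
    | none => simpa only [_root_.applyMove, h] using hDb
    | some x =>
      by_cases hne : src = dst
      · rwa [hne, applyMove_relocate_self]
      have h1 := Fintype.sum_apply_update (List.count b) D src (D src).dropLast
      have h2 := Fintype.sum_apply_update (List.count b) (update D src (D src).dropLast) dst
        (D dst ++ [x])
      have h3 : (D src).count b = (D src).dropLast.count b + [x].count b := by
        rw [← List.count_append, List.dropLast_append_getLast? x h]
      rw [update_of_ne (Ne.symm hne), List.count_append] at h2
      rw [applyMove_relocate_of_ne h hne]
      omega

theorem play (hD : D.Distinct) (ms : List (Move S)) : (play D ms).Distinct := by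
  induction ms generalizing D with
  | nil => exact hD
  | cons m ms ih => exact ih (hD.applyMove m)

end Config.Distinct

section BadlyPlaced

variable {C D : Config B S}

theorem BadlyPlaced.of_prefix (hD : D.Distinct) {s : Fin S} {b : Fin B} (hb : b ∈ D s)
    (hDC : D s <+: C s) (h : BadlyPlaced D b) : BadlyPlaced C b := by
  obtain ⟨s', a, hab, i, j, hij, hi, hj⟩ := h
  obtain rfl := hD.eq_of_mem (List.mem_of_getElem? hj) hb
  exact ⟨s', a, hab, i, j, hij, hDC.getElem?_eq_some hi, hDC.getElem?_eq_some hj⟩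

theorem BadlyPlaced.applyMove {m : Move S} (hEn : Enabled D m) {b : Fin B} (h : BadlyPlaced D b)
    (hmov : ¬ MovedBlock D m b) : BadlyPlaced (applyMove D m) b := by
  obtain ⟨s, a, hab, i, j, hij, hi, hj⟩ := h
  have hjlen := (List.getElem?_eq_some_iff.1 hj).1
  rcases prefix_applyMove_or_eq_dropLast D m s with hpre | ⟨hdrop, hm⟩
  · exact ⟨s, a, hab, i, j, hij, hpre.getElem?_eq_some hi, hpre.getElem?_eq_some hj⟩
  by_cases htop : j < (D s).length - 1
  · refine ⟨s, a, hab, i, j, hij, ?_, ?_⟩ <;>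
      rw [hdrop, List.getElem?_dropLast, if_pos (by omega)] <;> assumption
  have hlast : (D s).getLast? = some b := by
    rwa [List.getLast?_eq_getElem?, show (D s).length - 1 = j by omega]
  rcases hm with rfl | ⟨d, hd, rfl⟩
  · obtain ⟨b', hb', hmin⟩ := hEn
    cases hlast.symm.trans hb'
    exact absurd (hmin s a (List.mem_of_getElem? hi)) (not_le.2 hab)
  · exact absurd ⟨s, d, rfl, hd.symm, hlast⟩ hmov

theorem not_mTypeOf_BG_relocate (hD : D.Distinct) {s d : Fin S} (hsd : s ≠ d) {b : Fin B}
    (hDC : D s <+: C s) (hb : (D s).getLast? = some b)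
    (hlow : BadlyPlaced C b → ∃ a ∈ D d, a < b) :
    ¬ MTypeOf D (.relocate s d) b .BG := by
  rintro ⟨hbad, hgood⟩
  obtain ⟨a, ha, hab⟩ := hlow (hbad.of_prefix hD (List.mem_of_getLast? hb) hDC)
  obtain ⟨i, hi⟩ := List.getElem?_of_mem ha
  apply hgood
  refine ⟨d, a, hab, i, (D d).length, (List.getElem?_eq_some_iff.1 hi).1, ?_, ?_⟩
  · rw [applyMove_relocate_of_ne hb hsd, update_self, List.getElem?_append_left
      (List.getElem?_eq_some_iff.1 hi).1, hi]
  · rw [applyMove_relocate_of_ne hb hsd, update_self, List.getElem?_concat_length]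

end BadlyPlaced

theorem play_append (D : Config B S) (l₁ l₂ : List (Move S)) :
    play D (l₁ ++ l₂) = play (play D l₁) l₂ := by
  induction l₁ generalizing D with
  | nil => rfl
  | cons m l₁ ih => exact ih _

theorem allEnabled_append {D : Config B S} {l₁ l₂ : List (Move S)} (h₁ : AllEnabled D l₁)
    (h₂ : AllEnabled (play D l₁) l₂) : AllEnabled D (l₁ ++ l₂) := by
  induction l₁ generalizing D with
  | nil => exact h₂
  | cons m l₁ ih => exact ⟨h₁.1, ih h₁.2 h₂⟩

theorem play_take_succ (D : Config B S) {ms : List (Move S)} {i : ℕ} (hi : i < ms.length) :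
    play D (ms.take (i + 1)) = applyMove (play D (ms.take i)) ms[i] := by
  rw [List.take_add_one, List.getElem?_eq_getElem hi, play_append]
  rfl

theorem AllEnabled.enabled_getElem {D : Config B S} {ms : List (Move S)} (h : AllEnabled D ms)
    {i : ℕ} (hi : i < ms.length) : Enabled (play D (ms.take i)) ms[i] := by
  induction ms generalizing D i with
  | nil => simp at hi
  | cons m ms ih =>
    cases i with
    | zero => exact h.1
    | succ i => exact ih h.2 (by simpa using hi)

theorem play_replicate_relocate {D : Config B S} {s d : Fin S} (hsd : s ≠ d)
    {pre l : List (Fin B)} (hD : D s = pre ++ l) :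
    AllEnabled D (List.replicate l.length (.relocate s d)) ∧
      play D (List.replicate l.length (.relocate s d)) =
        update (update D s pre) d (D d ++ l.reverse) := by
  induction l using List.reverseRecOn generalizing D with
  | nil =>
    refine ⟨trivial, ?_⟩
    rw [List.append_nil] at hD
    simp [← hD, play]
  | append_singleton l x ih =>
    have hlast : (D s).getLast? = some x := by simp [hD]
    have hmove := applyMove_relocate_of_ne hlast hsd
    rw [hD, ← List.append_assoc, List.dropLast_concat] at hmove
    obtain ⟨hEn, hplay⟩ := ih (D := applyMove D (.relocate s d))
      (by rw [hmove, update_of_ne hsd, update_self])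
    rw [List.length_append, List.length_singleton, List.replicate_succ]
    refine ⟨⟨⟨hsd, by simp [hD]⟩, hEn⟩, ?_⟩
    rw [play, hplay, hmove]
    ext1 j
    simp only [update_apply]
    split_ifs <;> simp_all

theorem exists_feasible (hS : 2 ≤ S) (D : Config B S) : ∃ ms, Feasible D ms := by
  classical
  induction hN : ∑ s, (D s).length using Nat.strong_induction_on generalizing D with
  | _ N ih =>
  by_cases hempty : ∀ s, D s = []
  · exact ⟨[], trivial, hempty⟩
  obtain ⟨s₀, hs₀⟩ := not_forall.1 hempty
  obtain ⟨m, hm, hmin⟩ := Finset.exists_min_image (Finset.univ.filter fun b => ∃ s, b ∈ D s) id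
    ⟨(D s₀).head hs₀, by simpa using ⟨s₀, List.head_mem hs₀⟩⟩
  simp only [Finset.mem_filter, Finset.mem_univ, true_and, id, forall_exists_index] at hm hmin
  obtain ⟨s, hs⟩ := hm
  obtain ⟨pre, above, hDs⟩ := List.append_of_mem hs
  have := Fin.nontrivial_iff_two_le.2 hS
  obtain ⟨d, hd⟩ := exists_ne s
  -- dig out `m` by moving the blocks above it onto stack `d`, then retrieve it
  obtain ⟨hEn, hplay⟩ := play_replicate_relocate (D := D) hd.symm (l := above)
    (pre := pre ++ [m]) (by simp [hDs])
  set D₁ := play D (List.replicate above.length (.relocate s d))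
  have hD₁s : D₁ s = pre ++ [m] := by simp [hplay, hd.symm]
  have hretr : Enabled D₁ (.retrieve s) := by
    refine ⟨m, by simp [hD₁s], fun s' b hb => ?_⟩
    rw [hplay] at hb
    by_cases h1 : s' = d
    · subst h1
      simp only [update_self, List.mem_append, List.mem_reverse] at hb
      rcases hb with hb | hb
      · exact hmin b s' hb
      · exact hmin b s (by simp [hDs, hb])
    by_cases h2 : s' = s
    · subst h2
      simp only [update_of_ne h1, update_self, List.mem_append, List.mem_singleton] at hb
      rcases hb with hb | rfl
      · exact hmin b s' (by simp [hDs, hb])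
      · exact le_rfl
    · rw [update_of_ne h1, update_of_ne h2] at hb
      exact hmin b s' hb
  have hsize : ∑ j, (applyMove D₁ (.retrieve s) j).length < N := by
    have h₁ := Fintype.sum_apply_update List.length D₁ s pre
    have h₂ := Fintype.sum_apply_update List.length (update D s (pre ++ [m])) d
      (D d ++ above.reverse)
    have h₃ := Fintype.sum_apply_update List.length D s (pre ++ [m])
    rw [← hplay, update_of_ne hd] at h₂
    rw [applyMove_retrieve, hD₁s, List.dropLast_concat]
    simp only [hD₁s, hDs, List.length_append, List.length_cons, List.length_reverse]
      at h₁ h₂ h₃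
    omega
  obtain ⟨ms, hms, hend⟩ := ih _ hsize _ rfl
  refine ⟨_ ++ Move.retrieve s :: ms, allEnabled_append hEn ⟨hretr, hms⟩, ?_⟩
  rwa [play_append]

section Counting

-- `countMoves` decides its predicates classically; so must the `if`s below.
open Classical

theorem countMoves_cons (P : Config B S → Move S → Prop) (D : Config B S) (m : Move S)
    (ms : List (Move S)) :
    countMoves P D (m :: ms) = (if P D m then 1 else 0) + countMoves P (applyMove D m) ms := rfl

theorem countMoves_eq_card (P : Config B S → Move S → Prop) (D : Config B S)
    (ms : List (Move S)) :
    countMoves P D ms = (Finset.univ.filter fun i : Fin ms.length =>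
      P (play D (ms.take i)) ms[i]).card := by
  induction ms generalizing D with
  | nil => rfl
  | cons m ms ih =>
    rw [countMoves_cons, ih, Finset.card_filter, Finset.card_filter, eq_comm]
    exact (Fin.sum_univ_succ (n := ms.length) _).trans (by simp [play])

theorem countMoves_add_of_iff {P Q R : Config B S → Move S → Prop}
    (hP : ∀ D m, P D m ↔ Q D m ∨ R D m) (hQR : ∀ D m, Q D m → ¬ R D m) (D : Config B S)
    (ms : List (Move S)) : countMoves P D ms = countMoves Q D ms + countMoves R D ms := by
  induction ms generalizing D with
  | nil => rfl
  | cons m ms ih =>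
    simp only [countMoves_cons, ih, hP]
    have := hQR D m
    split_ifs <;> first | omega | (exfalso; tauto)

theorem countMoves_relocIn (𝔅 : Set (Fin B)) (D : Config B S) (ms : List (Move S)) :
    countMoves (RelocIn 𝔅) D ms =
      countMoves (RelocTypeIn .BG 𝔅) D ms + countMoves (RelocNonBGIn 𝔅) D ms := by
  refine countMoves_add_of_iff (fun D m => ?_) (fun D m => ?_) D ms
  · constructor
    · rintro ⟨b, hb, hmov⟩
      by_cases hBG : MTypeOf D m b .BG
      exacts [Or.inl ⟨b, hb, hmov, hBG⟩, Or.inr ⟨b, hb, hmov, hBG⟩]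
    · rintro (⟨b, hb, hmov, -⟩ | ⟨b, hb, hmov, -⟩) <;> exact ⟨b, hb, hmov⟩
  · rintro ⟨b, -, hmov, hBG⟩ ⟨b', -, hmov', hBG'⟩
    exact hBG' (hmov.unique hmov' ▸ hBG)

theorem ncard_badlyPlaced_le_countMoves_BG {D : Config B S} {ms : List (Move S)}
    (hAE : AllEnabled D ms) (hend : ∀ s, play D ms s = []) :
    {b | BadlyPlaced D b}.ncard ≤ countMoves (RelocTypeIn .BG Set.univ) D ms := by
  induction ms generalizing D with
  | nil =>
    have hnone : ∀ b, ¬ BadlyPlaced D b := by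
      rintro b ⟨s, a, -, i, j, -, -, hj⟩
      simp [show D s = [] from hend s] at hj
    simp [hnone]
  | cons m ms ih =>
    obtain ⟨hEn, hAE⟩ := hAE
    refine le_trans ?_ (Nat.add_le_add_left (ih hAE hend) _)
    split_ifs with hBG
    · obtain ⟨b₀, -, hmov₀, -⟩ := hBG
      calc {b | BadlyPlaced D b}.ncard
          ≤ (insert b₀ {b | BadlyPlaced (applyMove D m) b}).ncard := by
            refine Set.ncard_le_ncard (fun b hb => ?_) (Set.toFinite _)
            by_cases hmov : MovedBlock D m b
            · exact Or.inl (hmov.unique hmov₀)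
            · exact Or.inr (hb.applyMove hEn hmov)
        _ ≤ 1 + _ := by rw [add_comm]; exact Set.ncard_insert_le _ _
    · rw [zero_add]
      refine Set.ncard_le_ncard (fun b hb => ?_) (Set.toFinite _)
      by_cases hmov : MovedBlock D m b
      · by_contra hgood
        exact hBG ⟨b, Set.mem_univ b, hmov, hb, hgood⟩
      · exact hb.applyMove hEn hmov

end Counting

theorem relocNonBGIn_of_not_prefix {C D : Config B S} {m : Move S} {s : Fin S}
    {P : List (Fin B)} {b : Fin B} (hD : D.Distinct) (hEn : Enabled D m) (hPC : P <+: C s)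
    (hb : P.getLast? = some b) (hnotmin : ∃ s' a, a ∈ D s' ∧ a < b)
    (hlow : BadlyPlaced C b → ∀ d, ∃ a ∈ D d, a < b)
    (hpre : P <+: D s) (hbreak : ¬ P <+: applyMove D m s) :
    RelocNonBGIn Set.univ D m := by
  obtain ⟨hDs, rfl | ⟨d, hd, rfl⟩⟩ := eq_of_prefix_of_not_prefix_applyMove hpre hbreak
  · obtain ⟨b', hb', hmin⟩ := hEn
    cases (hDs ▸ hb').symm.trans hb
    obtain ⟨s', a, ha, hab⟩ := hnotmin
    exact absurd (hmin s' a ha) (not_le.2 hab)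
  · subst hDs
    exact ⟨b, trivial, ⟨s, d, rfl, hd.symm, hb⟩,
      not_mTypeOf_BG_relocate hD hd.symm hPC hb fun h => hlow h d⟩

theorem IsConfig.exists_mem_rdrop {C : Config B S} (hC : IsConfig C) {k : ℕ} {t : Fin B}
    (htout : t ∉ TopK C k) : ∃ s, t ∈ (C s).rdrop (k - 1) := by
  obtain ⟨s, hs⟩ := hC.exists_mem t
  exact ⟨s, (List.take_prefix_take_left (by omega)).subset
    (List.mem_rdrop_of_not_mem_rtake hs fun h => htout ⟨s, h⟩)⟩

theorem exists_relocNonBGIn_of_first_disturbance {C : Config B S} (hC : IsConfig C) {k : ℕ}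
    {t : Fin B} (ht : ∀ b, t ≤ b) (htout : t ∉ TopK C k)
    (hcond : ∀ b ∈ TopK C k, BadlyPlaced C b → ∀ s, ∃ a ∈ (C s).rdrop (k - 1), a < b)
    {ms : List (Move S)} (hAE : AllEnabled C ms) {i₀ : ℕ} (hi₀ : i₀ < ms.length)
    (hintact : ∀ j ≤ i₀, ∀ s, (C s).rdrop (k - 1) <+: play C (ms.take j) s)
    {s : Fin S} (hs : ¬ (C s).rdrop (k - 1) <+: play C (ms.take (i₀ + 1)) s)
    {p : ℕ} (hpk : (C s).length - k ≤ p) (hp : p < (C s).length) :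
    ∃ i : Fin ms.length, play C (ms.take i) s = (C s).take (p + 1) ∧
      RelocNonBGIn Set.univ (play C (ms.take i)) ms[i] := by
  obtain ⟨σ, hσ, hpre, hbrk⟩ := Nat.exists_forall_le_and_not_succ (n := i₀ + 1)
    (Q := fun i => (C s).take (p + 1) <+: play C (ms.take i) s) (List.take_prefix _ _)
    (fun h => hs ((List.take_prefix_take_left (by omega)).trans h))
  replace hpre := hpre σ le_rfl
  have hσn : σ < ms.length := by omega
  rw [play_take_succ C hσn] at hbrk
  obtain ⟨b, hb⟩ : ∃ b, (C s)[p]? = some b := ⟨_, List.getElem?_eq_getElem hp⟩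
  have hbtop : b ∈ TopK C k := ⟨s, List.mem_rtake_of_getElem? hb hpk⟩
  have hintσ := hintact σ (by omega)
  obtain ⟨s₀, ht₀⟩ := hC.exists_mem_rdrop htout
  refine ⟨⟨σ, hσn⟩, (eq_of_prefix_of_not_prefix_applyMove hpre hbrk).1,
    relocNonBGIn_of_not_prefix (hC.distinct.play _) (hAE.enabled_getElem hσn)
      (List.take_prefix _ _) (by simp [List.getLast?_take, hb])
      ⟨s₀, t, (hintσ s₀).subset ht₀, lt_of_le_of_ne (ht b) (by rintro rfl; exact htout hbtop)⟩
      (fun hbad d => ?_) hpre hbrk⟩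
  obtain ⟨a, ha, hab⟩ := hcond b hbtop hbad d
  exact ⟨a, (hintσ d).subset ha, hab⟩

theorem le_countMoves_relocNonBGIn {C : Config B S} (hC : IsConfig C) {k : ℕ} {t : Fin B}
    (ht : ∀ b, t ≤ b) (htout : t ∉ TopK C k)
    (hcond : ∀ b ∈ TopK C k, BadlyPlaced C b → ∀ s, ∃ a ∈ (C s).rdrop (k - 1), a < b)
    {ms : List (Move S)} (hms : Feasible C ms) :
    k ≤ countMoves (RelocNonBGIn Set.univ) C ms := by
  classical
  obtain ⟨hAE, hend⟩ := hms
  obtain ⟨s₀, ht₀⟩ := hC.exists_mem_rdrop htout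
  -- move `i₀` is the first to disturb a lower part `rdrop (k - 1)`
  obtain ⟨i₀, hi₀, hintact, hbreak⟩ := Nat.exists_forall_le_and_not_succ
    (Q := fun i => ∀ s, (C s).rdrop (k - 1) <+: play C (ms.take i) s) (n := ms.length)
    (fun s => List.take_prefix _ _) (fun h => by simpa [hend] using (h s₀).subset ht₀)
  obtain ⟨s, hs⟩ := not_forall.1 hbreak
  have hk : k ≤ (C s).length := by
    by_contra! h
    rw [List.rdrop, show (C s).length - (k - 1) = 0 by omega, List.take_zero] at hs
    exact hs List.nil_prefix
  have : Nonempty (Fin ms.length) := ⟨⟨i₀, hi₀⟩⟩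
  choose! σ hσ using fun p (hp : p ∈ Finset.Ico ((C s).length - k) (C s).length) =>
    exists_relocNonBGIn_of_first_disturbance hC ht htout hcond hAE hi₀ hintact hs
      (Finset.mem_Ico.1 hp).1 (Finset.mem_Ico.1 hp).2
  rw [countMoves_eq_card]
  calc k = (Finset.Ico ((C s).length - k) (C s).length).card := by rw [Nat.card_Ico]; omega
    _ ≤ _ := Finset.card_le_card_of_injOn σ (fun p hp => by simpa using (hσ p hp).2)
      fun p hp q hq hpq => ?_
  have := congrArg List.length ((hσ p hp).1.symm.trans (hpq ▸ (hσ q hq).1))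
  simp only [Finset.coe_Ico, Set.mem_Ico, List.length_take] at hp hq this
  omega

end

theorem brp_LB3_general {B S : ℕ} (hS : 2 ≤ S)
    (C : Config B S) (hC : IsConfig C)
    (k : ℕ)
    (t : Fin B) (ht : ∀ b, t ≤ b) (htout : t ∉ TopK C k)
    (hcond : ∀ b ∈ TopK C k, BadlyPlaced C b →
      ∀ s : Fin S, ∃ a ∈ (C s).take ((C s).length - (k - 1)), a < b) :
    {b | BadlyPlaced C b}.ncard + k ≤ fRel C Set.univ := by
  obtain ⟨ms₀, hms₀⟩ := exists_feasible hS C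
  refine le_csInf ⟨_, ms₀, hms₀, rfl⟩ ?_
  rintro _ ⟨ms, hms, rfl⟩
  rw [countMoves_relocIn]
  exact add_le_add (ncard_badlyPlaced_le_countMoves_BG hms.1 hms.2)
    (le_countMoves_relocNonBGIn hC ht htout hcond hms)

/-- validity of LB3: under the conditions of Property 3 for the top
`k` layers, `f(Fin B) ≥ |𝔅¹| + k`, where `𝔅¹` is the set of badly placed blocks. -/
theorem brp_LB3 {B S : ℕ} (hS : 2 ≤ S) (hB : 1 ≤ B)
    (C : Config B S) (hC : IsConfig C)
    (k : ℕ) (hk : ∀ s, k ≤ (C s).length)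
    (t : Fin B) (ht : ∀ b, t ≤ b) (htout : t ∉ TopK C k)
    (hcond : ∀ b ∈ TopK C k, BadlyPlaced C b →
      ∀ s : Fin S, ∃ a ∈ (C s).take ((C s).length - (k - 1)), a < b) :
    {b | BadlyPlaced C b}.ncard + k ≤ fRel C Set.univ :=
  brp_LB3_general hS C hC k t ht htout hcond
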